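/- arXiv:1903.02342 — 3 statements merged into one kernel-verified Lean document; each statement's English description precedes it below -/
import Mathlib

section
/- Let (X,d,μ) be a metric measure space where μ is a Borel measure that is positive on nonempty open sets and finite on bounded sets. Let 1 ≤ p < q < ∞ and let C_e > 0. Suppose the Sobolev embedding inequality holds: for every μ-measurable function u : X → ℝ and every nonnegative μ-measurable function g : X → ℝ such that |u(x) − u(y)| ≤ d(x,y)(g(x) + g(y)) for μ-almost every x and y, one has (∫_X |u|^q dμ)^{1/q} ≤ C_e [(∫_X |u|^p dμ)^{1/p} + (∫_X g^p dμ)^{1/p}]. Then there exists a constant C > 0 depending only on p, q, C_e such that μ(B(x,r)) ≥ C r^n for every x ∈ X and every r ∈ (0,1], where n = pq/(q−p) (equivalently 1/p − 1/q = 1/n). -/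
/-!
Test the embedding on the cutoff `u` that equals `1` on `B(x, s')`, vanishes off `B(x, s)` and is
`1/(s - s')`-Lipschitz, with gradient `g = 1_{B(x, s)}/(s - s')`: for `s - s' ≤ 1` this gives
`μ(B(x, s'))^(1/q) ≤ 2 C_e/(s - s') · μ(B(x, s))^(1/p)`. Along the radii `R_k = r/2 + r/2^(k+1)`,
which decrease to `r/2` rather than to `0` so that `a_k = log μ(B(x, R_k))` stays bounded, this
reads `θ a_{k+1} - p (log (8 C_e/r) + k log 2) ≤ a_k` with `θ = p/q`. Unrolling the recursion and
summing `∑ θ^k = 1/(1-θ)` and `∑ k θ^k = θ/(1-θ)²` gives `μ(B(x, r)) ≥ C r^(p/(1-θ))`.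
-/

open MeasureTheory Metric ENNReal Filter Topology

theorem hasSum_geometric_mul_add {θ : ℝ} (hθ0 : 0 ≤ θ) (hθ1 : θ < 1) (α β : ℝ) :
    HasSum (fun k : ℕ => θ ^ k * (α + k * β)) (α / (1 - θ) + β * θ / (1 - θ) ^ 2) := by
  have hgeom := (hasSum_geometric_of_lt_one hθ0 hθ1).mul_left α
  have hcoe := (hasSum_coe_mul_geometric_of_norm_lt_one
    (by rwa [Real.norm_of_nonneg hθ0] : ‖θ‖ < 1)).mul_left β
  rw [show α / (1 - θ) + β * θ / (1 - θ) ^ 2 = α * (1 - θ)⁻¹ + β * (θ / (1 - θ) ^ 2) by ring]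
  exact (hgeom.add hcoe).congr_fun fun k => by ring

theorem le_of_hasSum_of_mul_add_le {θ c B : ℝ} {a b : ℕ → ℝ} (hθ0 : 0 ≤ θ) (hθ1 : θ < 1)
    (hab : ∀ k, θ * a (k + 1) + b k ≤ a k) (hc : ∀ k, c ≤ a k)
    (hB : HasSum (fun k => θ ^ k * b k) B) : B ≤ a 0 := by
  have hunroll : ∀ K, θ ^ K * a K + ∑ k ∈ Finset.range K, θ ^ k * b k ≤ a 0 := by
    intro K
    induction K with
    | zero => simp
    | succ K ih =>
      have := mul_le_mul_of_nonneg_left (hab K) (pow_nonneg hθ0 K)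
      rw [Finset.sum_range_succ, pow_succ]
      linarith
  have hlim : Tendsto (fun K => θ ^ K * c + ∑ k ∈ Finset.range K, θ ^ k * b k) atTop
      (𝓝 (0 * c + B)) :=
    ((tendsto_pow_atTop_nhds_zero_of_lt_one hθ0 hθ1).mul_const c).add hB.tendsto_sum_nat
  rw [zero_mul, zero_add] at hlim
  refine le_of_tendsto' hlim fun K => ?_
  linarith [hunroll K, mul_le_mul_of_nonneg_left (hc K) (pow_nonneg hθ0 K)]

theorem le_apply_of_rpow_le_div_rpow_mul {f : ℝ → ℝ} {p θ D r : ℝ} (hθ0 : 0 ≤ θ) (hθ1 : θ < 1)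
    (hD : 0 < D) (hr : 0 < r) (hf : Monotone f) (hf0 : 0 < f (r / 2))
    (hstep : ∀ s' s, r / 2 < s' → s' < s → s ≤ r → f s' ^ θ ≤ (D / (s - s')) ^ p * f s) :
    (4 * D) ^ (-(p / (1 - θ))) * 2 ^ (-(p * θ / (1 - θ) ^ 2)) * r ^ (p / (1 - θ)) ≤ f r := by
  set R : ℕ → ℝ := fun k => r / 2 + r / 2 ^ (k + 1) with hR
  have hR_gt : ∀ k, r / 2 < R k := fun k => lt_add_of_pos_right _ (by positivity)
  have hR_sub : ∀ k, R k - R (k + 1) = r / 2 ^ (k + 2) := fun k => by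
    simp only [hR]; field_simp; ring
  have hR_le : ∀ k, R k ≤ r := fun k => by
    have : r / 2 ^ (k + 1) ≤ r / 2 := div_le_div_of_nonneg_left hr.le two_pos
      (le_self_pow₀ one_le_two k.succ_ne_zero)
    simp only [hR]; linarith
  have hfR : ∀ k, 0 < f (R k) := fun k => hf0.trans_le (hf (hR_gt k).le)
  set L := Real.log (4 * D / r)
  have hrec : ∀ k : ℕ, θ * Real.log (f (R (k + 1))) + (-(p * L) + k * -(p * Real.log 2)) ≤
      Real.log (f (R k)) := by
    intro k
    have hlt : R (k + 1) < R k := by linarith [hR_sub k, (by positivity : 0 < r / 2 ^ (k + 2))]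
    have h := hstep _ _ (hR_gt (k + 1)) hlt (hR_le k)
    rw [hR_sub, show D / (r / 2 ^ (k + 2)) = 4 * D / r * 2 ^ k by field_simp; ring] at h
    have hlog := Real.log_le_log (by have := hfR (k + 1); positivity) h
    rw [Real.log_rpow (hfR _), Real.log_mul (by positivity) (hfR k).ne',
      Real.log_rpow (by positivity), Real.log_mul (by positivity) (by positivity),
      Real.log_pow] at hlog
    linarith
  have hsum := le_of_hasSum_of_mul_add_le hθ0 hθ1 hrec
    (fun k => Real.log_le_log hf0 (hf (hR_gt k).le)) (hasSum_geometric_mul_add hθ0 hθ1 _ _)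
  have hR0 : R 0 = r := by norm_num [hR]
  rw [hR0] at hsum
  have hfr : 0 < f r := hR0 ▸ hfR 0
  calc (4 * D) ^ (-(p / (1 - θ))) * 2 ^ (-(p * θ / (1 - θ) ^ 2)) * r ^ (p / (1 - θ))
      = Real.exp (-(p * L) / (1 - θ) + -(p * Real.log 2) * θ / (1 - θ) ^ 2) := by
        rw [Real.rpow_def_of_pos (by positivity), Real.rpow_def_of_pos two_pos,
          Real.rpow_def_of_pos hr, ← Real.exp_add, ← Real.exp_add,
          show L = Real.log (4 * D) - Real.log r from Real.log_div (by positivity) hr.ne']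
        ring_nf
    _ ≤ f r := by rwa [← Real.le_log_iff_exp_le hfr]

section Cutoff

variable {X : Type*} [PseudoMetricSpace X]

noncomputable def ballCutoff (x : X) (s ε : ℝ) (y : X) : ℝ :=
  max 0 (min 1 ((s - dist x y) / ε))

theorem ballCutoff_eq_one {x y : X} {s ε : ℝ} (hε : 0 < ε) (h : dist x y ≤ s - ε) :
    ballCutoff x s ε y = 1 := by
  rw [ballCutoff, min_eq_left ((one_le_div hε).2 (by linarith)), max_eq_right zero_le_one]

theorem ballCutoff_eq_zero {x y : X} {s ε : ℝ} (hε : 0 < ε) (h : s ≤ dist x y) :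
    ballCutoff x s ε y = 0 :=
  max_eq_left ((min_le_right _ _).trans (div_nonpos_of_nonpos_of_nonneg (by linarith) hε.le))

theorem abs_ballCutoff_le_one (x y : X) (s ε : ℝ) : |ballCutoff x s ε y| ≤ 1 := by
  rw [abs_of_nonneg (le_max_left _ _)]
  exact max_le zero_le_one (min_le_left _ _)

theorem abs_ballCutoff_sub_le (x : X) (s : ℝ) {ε : ℝ} (hε : 0 < ε) (y z : X) :
    |ballCutoff x s ε y - ballCutoff x s ε z| ≤ ε⁻¹ * dist y z := by
  have hclamp : LipschitzWith 1 fun t : ℝ => max 0 (min 1 t) :=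
    (LipschitzWith.id.const_min 1).const_max 0
  have h := hclamp.dist_le_mul ((s - dist x y) / ε) ((s - dist x z) / ε)
  rw [Real.dist_eq, Real.dist_eq, NNReal.coe_one, one_mul,
    show (s - dist x y) / ε - (s - dist x z) / ε = ε⁻¹ * (dist x z - dist x y) by ring,
    abs_mul, abs_of_pos (inv_pos.2 hε)] at h
  refine h.trans (mul_le_mul_of_nonneg_left ?_ (inv_pos.2 hε).le)
  simpa only [dist_comm] using abs_dist_sub_le z y x

theorem continuous_ballCutoff (x : X) (s ε : ℝ) : Continuous (ballCutoff x s ε) := by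
  unfold ballCutoff
  fun_prop

end Cutoff

section Lintegral

variable {X : Type*} [MeasurableSpace X] {μ : Measure X} {S : Set X}

theorem measure_le_lintegral_rpow_of_eqOn_one {u : X → ℝ} (hS : MeasurableSet S)
    (hu : ∀ y ∈ S, u y = 1) (q : ℝ) :
    μ S ≤ ∫⁻ y, ENNReal.ofReal |u y| ^ q ∂μ :=
  calc μ S = ∫⁻ _ in S, 1 ∂μ := (setLIntegral_one S).symm
    _ = ∫⁻ y in S, ENNReal.ofReal |u y| ^ q ∂μ :=
        setLIntegral_congr_fun hS fun y hy => by simp [hu y hy]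
    _ ≤ _ := setLIntegral_le_lintegral _ _

theorem lintegral_rpow_le_measure {u : X → ℝ} {p : ℝ} (hp : 0 < p)
    (hS : MeasurableSet S) (hu : ∀ y, |u y| ≤ 1) (hu0 : ∀ y ∉ S, u y = 0) :
    ∫⁻ y, ENNReal.ofReal |u y| ^ p ∂μ ≤ μ S :=
  calc ∫⁻ y, ENNReal.ofReal |u y| ^ p ∂μ ≤ ∫⁻ y, S.indicator 1 y ∂μ := by
        refine lintegral_mono fun y => ?_
        by_cases hy : y ∈ S
        · simpa [hy] using ENNReal.rpow_le_one (ENNReal.ofReal_le_one.2 (hu y)) hp.le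
        · simp [hy, hu0 y hy, hp]
    _ = μ S := lintegral_indicator_one hS

theorem lintegral_ofReal_indicator_rpow {p : ℝ} (hp : 0 < p)
    (hS : MeasurableSet S) (c : ℝ) :
    ∫⁻ y, ENNReal.ofReal (S.indicator (fun _ => c) y) ^ p ∂μ = ENNReal.ofReal c ^ p * μ S := by
  have : (fun y => ENNReal.ofReal (S.indicator (fun _ => c) y) ^ p) =
      S.indicator fun _ => ENNReal.ofReal c ^ p := by
    ext y
    by_cases hy : y ∈ S <;> simp [hy, hp]
  rw [this, lintegral_indicator_const hS]

end Lintegral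

section HajlaszSobolev

variable {X : Type*} [MetricSpace X] [MeasurableSpace X]

def IsHajlaszGradient (μ : Measure X) (u g : X → ℝ) : Prop :=
  ∀ᵐ y ∂μ, ∀ᵐ z ∂μ, |u y - u z| ≤ dist y z * (g y + g z)

def HajlaszSobolevEmbedding (μ : Measure X) (p q Ce : ℝ) : Prop :=
  ∀ u g : X → ℝ, AEMeasurable u μ → AEMeasurable g μ → (∀ y, 0 ≤ g y) →
    IsHajlaszGradient μ u g →
    (∫⁻ y, ENNReal.ofReal |u y| ^ q ∂μ) ^ (1 / q) ≤
      ENNReal.ofReal Ce *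
        ((∫⁻ y, ENNReal.ofReal |u y| ^ p ∂μ) ^ (1 / p) +
          (∫⁻ y, ENNReal.ofReal (g y) ^ p ∂μ) ^ (1 / p))

theorem isHajlaszGradient_indicator_of_abs_sub_le (μ : Measure X) {u : X → ℝ} {S : Set X}
    {L : ℝ} (hL : 0 ≤ L) (hu : ∀ y z, |u y - u z| ≤ L * dist y z) (hS : ∀ y ∉ S, u y = 0) :
    IsHajlaszGradient μ u (S.indicator fun _ => L) := by
  have hind : ∀ y, 0 ≤ S.indicator (fun _ => L) y := Set.indicator_nonneg fun _ _ => hL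
  have hmem : ∀ y z, y ∈ S → |u y - u z| ≤ dist y z * (S.indicator (fun _ => L) y +
      S.indicator (fun _ => L) z) := fun y z hy => by
    rw [Set.indicator_of_mem hy, mul_comm (dist y z)]
    exact (hu y z).trans
      (mul_le_mul_of_nonneg_right (le_add_of_nonneg_right (hind z)) dist_nonneg)
  refine ae_of_all _ fun y => ae_of_all _ fun z => ?_
  by_cases hy : y ∈ S
  · exact hmem y z hy
  by_cases hz : z ∈ S
  · rw [abs_sub_comm, dist_comm, add_comm]
    exact hmem z y hz
  rw [hS y hy, hS z hz, sub_zero, abs_zero]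
  exact mul_nonneg dist_nonneg (add_nonneg (hind y) (hind z))

theorem HajlaszSobolevEmbedding.measure_ball_rpow_le [OpensMeasurableSpace X] {μ : Measure X}
    {p q Ce : ℝ}
    (hembed : HajlaszSobolevEmbedding μ p q Ce) (hp : 0 < p) (hq : 0 < q) (hCe : 0 ≤ Ce)
    (x : X) {s' s : ℝ} (hs's : s' < s) (hs : s - s' ≤ 1) :
    μ (ball x s') ^ (1 / q) ≤ ENNReal.ofReal (2 * Ce / (s - s')) * μ (ball x s) ^ (1 / p) := by
  set ε := s - s'
  have hε : 0 < ε := sub_pos.2 hs's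
  set u := ballCutoff x s ε
  have hu_zero : ∀ y ∉ ball x s, u y = 0 := fun y hy =>
    ballCutoff_eq_zero hε (by rwa [mem_ball, not_lt, dist_comm] at hy)
  have hgrad : IsHajlaszGradient μ u ((ball x s).indicator fun _ => ε⁻¹) :=
    isHajlaszGradient_indicator_of_abs_sub_le μ (inv_nonneg.2 hε.le)
      (abs_ballCutoff_sub_le x s hε) hu_zero
  have hemb := hembed u _ (continuous_ballCutoff x s ε).aemeasurable
    (measurable_const.indicator measurableSet_ball).aemeasurable
    (Set.indicator_nonneg fun _ _ => inv_nonneg.2 hε.le) hgrad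
  have hq_int : μ (ball x s') ≤ ∫⁻ y, ENNReal.ofReal |u y| ^ q ∂μ :=
    measure_le_lintegral_rpow_of_eqOn_one measurableSet_ball
      (fun y hy => ballCutoff_eq_one hε (by rw [mem_ball, dist_comm] at hy; linarith)) q
  have hp_int : ∫⁻ y, ENNReal.ofReal |u y| ^ p ∂μ ≤ μ (ball x s) :=
    lintegral_rpow_le_measure hp measurableSet_ball (abs_ballCutoff_le_one x · s ε) hu_zero
  have hg_int : (∫⁻ y, ENNReal.ofReal ((ball x s).indicator (fun _ => ε⁻¹) y) ^ p ∂μ) ^ (1 / p)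
      = ENNReal.ofReal ε⁻¹ * μ (ball x s) ^ (1 / p) := by
    rw [lintegral_ofReal_indicator_rpow hp measurableSet_ball,
      mul_rpow_of_nonneg _ _ (by positivity), ← rpow_mul, mul_one_div_cancel hp.ne', rpow_one]
  have hconst : ENNReal.ofReal Ce * (1 + ENNReal.ofReal ε⁻¹) ≤ ENNReal.ofReal (2 * Ce / ε) := by
    rw [← ENNReal.ofReal_one, ← ENNReal.ofReal_add zero_le_one (by positivity),
      ← ENNReal.ofReal_mul hCe]
    refine ENNReal.ofReal_le_ofReal ?_
    calc Ce * (1 + ε⁻¹) ≤ Ce * (ε⁻¹ + ε⁻¹) := by gcongr; exact one_le_inv_iff₀.2 ⟨hε, hs⟩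
      _ = 2 * Ce / ε := by ring
  calc μ (ball x s') ^ (1 / q) ≤ (∫⁻ y, ENNReal.ofReal |u y| ^ q ∂μ) ^ (1 / q) :=
        ENNReal.rpow_le_rpow hq_int (by positivity)
    _ ≤ ENNReal.ofReal Ce *
          (μ (ball x s) ^ (1 / p) + ENNReal.ofReal ε⁻¹ * μ (ball x s) ^ (1 / p)) := by
        rw [← hg_int]
        exact hemb.trans (by gcongr)
    _ = ENNReal.ofReal Ce * (1 + ENNReal.ofReal ε⁻¹) * μ (ball x s) ^ (1 / p) := by ring
    _ ≤ ENNReal.ofReal (2 * Ce / ε) * μ (ball x s) ^ (1 / p) := by gcongr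

end HajlaszSobolev

theorem ENNReal.toReal_rpow_div_le_of_rpow_one_div_le {A B : ℝ≥0∞} {c p q : ℝ} (hp : 0 < p)
    (hc : 0 ≤ c) (hB : B ≠ ∞) (h : A ^ (1 / q) ≤ ENNReal.ofReal c * B ^ (1 / p)) :
    A.toReal ^ (p / q) ≤ c ^ p * B.toReal := by
  have h' := ENNReal.rpow_le_rpow h hp.le
  rw [← rpow_mul, mul_rpow_of_nonneg _ _ hp.le, ← rpow_mul, one_div_mul_cancel hp.ne', rpow_one,
    ENNReal.ofReal_rpow_of_nonneg hc hp.le, one_div_mul_eq_div] at h'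
  simpa [toReal_rpow, toReal_ofReal (by positivity : 0 ≤ c ^ p)] using
    ENNReal.toReal_mono (mul_ne_top ofReal_ne_top hB) h'

/-- If the Hajłasz–Sobolev embedding `M^{1,p}(X) ↪ L^q(X)` holds with constant `C_e`
in a metric measure space whose Borel measure is positive on nonempty open sets and
finite on bounded sets, then `μ(B(x,r)) ≥ C rⁿ` for all `x` and `0 < r ≤ 1`,
where `n = pq/(q-p)`, with `C = C(p, q, C_e) > 0`. -/
theorem sobolev_embedding_implies_measure_lower_bound
    {X : Type*} [MetricSpace X] [MeasurableSpace X] [BorelSpace X]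
    (μ : Measure X)
    (hopen : ∀ U : Set X, IsOpen U → U.Nonempty → 0 < μ U)
    (hbounded : ∀ s : Set X, Bornology.IsBounded s → μ s < ∞)
    (p q : ℝ) (hp : 1 ≤ p) (hpq : p < q)
    (Ce : ℝ) (hCe : 0 < Ce)
    (hembed : ∀ u g : X → ℝ, AEMeasurable u μ → AEMeasurable g μ → (∀ y, 0 ≤ g y) →
      (∀ᵐ y ∂μ, ∀ᵐ z ∂μ, |u y - u z| ≤ dist y z * (g y + g z)) →
      (∫⁻ y, ENNReal.ofReal |u y| ^ q ∂μ) ^ (1 / q) ≤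
        ENNReal.ofReal Ce *
          ((∫⁻ y, ENNReal.ofReal |u y| ^ p ∂μ) ^ (1 / p) +
            (∫⁻ y, ENNReal.ofReal (g y) ^ p ∂μ) ^ (1 / p))) :
    ∃ C : ℝ, 0 < C ∧ ∀ x : X, ∀ r : ℝ, 0 < r → r ≤ 1 →
      ENNReal.ofReal (C * r ^ (p * q / (q - p))) ≤ μ (ball x r) := by
  have hp0 : 0 < p := by linarith
  have hq0 : 0 < q := by linarith
  have hθ : p / q < 1 := (div_lt_one hq0).2 hpq
  have hn : p * q / (q - p) = p / (1 - p / q) := by field_simp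
  refine ⟨(4 * (2 * Ce)) ^ (-(p / (1 - p / q))) * 2 ^ (-(p * (p / q) / (1 - p / q) ^ 2)),
    by positivity, fun x r hr hr1 => ?_⟩
  have hfin : ∀ s, μ (ball x s) ≠ ∞ := fun s => (hbounded _ isBounded_ball).ne
  have hbound := le_apply_of_rpow_le_div_rpow_mul (f := fun s => (μ (ball x s)).toReal)
    (by positivity) hθ (by positivity) hr
    (fun _ _ h => ENNReal.toReal_mono (hfin _) (measure_mono (ball_subset_ball h)))
    (ENNReal.toReal_pos (hopen _ isOpen_ball ⟨x, mem_ball_self (by positivity)⟩).ne' (hfin _))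
    fun s' s _ hs's hs => ENNReal.toReal_rpow_div_le_of_rpow_one_div_le hp0 (by positivity)
      (hfin s) (HajlaszSobolevEmbedding.measure_ball_rpow_le hembed hp0 hq0 hCe.le x hs's
        (by linarith))
  rw [hn, ← ENNReal.ofReal_toReal (hfin r)]
  exact ENNReal.ofReal_le_ofReal hbound
end

section
/- Let (X,d,μ) be a metric measure space where μ is a Borel measure that is finite on bounded sets. Let 1 ≤ p < q < ∞ and C_e > 0, and suppose that for every μ-measurable u : X → ℝ and nonnegative μ-measurable g : X → ℝ with |u(y) − u(z)| ≤ d(y,z)(g(y) + g(z)) for μ-almost every y, z, one has (∫_X |u|^q dμ)^{1/q} ≤ C_e [(∫_X |u|^p dμ)^{1/p} + (∫_X g^p dμ)^{1/p}]. Then for every x ∈ X and all radii 0 < r' < r, μ(B(x,r'))^{1/q} ≤ C_e (1 + (r − r')^{-1}) μ(B(x,r))^{1/p}. -/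
open MeasureTheory Metric ENNReal

/-- Under the Hajłasz–Sobolev embedding hypothesis with constant `C_e` (and `μ`
finite on bounded sets), for every `x ∈ X` and all radii `0 < r' < r`,
`μ(B(x,r'))^{1/q} ≤ C_e (1 + (r - r')⁻¹) μ(B(x,r))^{1/p}`. -/
theorem ball_measure_iteration_inequality
    {X : Type*} [MetricSpace X] [MeasurableSpace X] [BorelSpace X]
    (μ : Measure X)
    (hbounded : ∀ s : Set X, Bornology.IsBounded s → μ s < ∞)
    (p q : ℝ) (hp : 1 ≤ p) (hpq : p < q)
    (Ce : ℝ) (hCe : 0 < Ce)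
    (hembed : ∀ u g : X → ℝ, AEMeasurable u μ → AEMeasurable g μ → (∀ y, 0 ≤ g y) →
      (∀ᵐ y ∂μ, ∀ᵐ z ∂μ, |u y - u z| ≤ dist y z * (g y + g z)) →
      (∫⁻ y, ENNReal.ofReal |u y| ^ q ∂μ) ^ (1 / q) ≤
        ENNReal.ofReal Ce *
          ((∫⁻ y, ENNReal.ofReal |u y| ^ p ∂μ) ^ (1 / p) +
            (∫⁻ y, ENNReal.ofReal (g y) ^ p ∂μ) ^ (1 / p))) :
    ∀ x : X, ∀ r' r : ℝ, 0 < r' → r' < r →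
      μ (ball x r') ^ (1 / q) ≤
        ENNReal.ofReal (Ce * (1 + (r - r')⁻¹)) * μ (ball x r) ^ (1 / p) := by
  intro x r' r hr' hr'r
  set δ : ℝ := r - r' with hδdef
  have hδ : 0 < δ := by simp [hδdef]; linarith
  have hp0 : 0 < p := lt_of_lt_of_le one_pos hp
  have hq0 : 0 < q := lt_trans hp0 hpq
  set u : X → ℝ := fun y => max 0 (min 1 ((r - dist x y) / δ)) with hu
  set g : X → ℝ := Set.indicator (ball x r) (fun _ => δ⁻¹) with hg
  have hu_cont : Continuous u := by
    apply continuous_const.max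
    exact continuous_const.min ((continuous_const.sub (continuous_const.dist continuous_id)).div_const δ)
  have hu_meas : AEMeasurable u μ := hu_cont.measurable.aemeasurable
  have hg_meas : AEMeasurable g μ :=
    ((measurable_const.indicator measurableSet_ball).aemeasurable : AEMeasurable g μ)
  have hg_nonneg : ∀ y, 0 ≤ g y := by
    intro y
    simp only [hg]
    by_cases h : y ∈ ball x r <;> simp [h, le_of_lt (inv_pos.mpr hδ)]
  have hu01 : ∀ y, 0 ≤ u y ∧ u y ≤ 1 := by
    intro y
    refine ⟨le_max_left _ _, ?_⟩
    simp only [hu, max_le_iff]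
    exact ⟨zero_le_one, min_le_left _ _⟩
  have hu_zero : ∀ y, y ∉ ball x r → u y = 0 := by
    intro y hy
    simp only [mem_ball, dist_comm] at hy
    push_neg at hy
    simp only [hu]
    have : (r - dist x y) / δ ≤ 0 := div_nonpos_of_nonpos_of_nonneg (by linarith) hδ.le
    rw [max_eq_left]
    exact le_trans (min_le_right _ _) this
  have hu_one : ∀ y, y ∈ ball x r' → u y = 1 := by
    intro y hy
    simp only [mem_ball, dist_comm] at hy
    simp only [hu]
    have h1 : (1:ℝ) ≤ (r - dist x y) / δ := by
      rw [le_div_iff₀ hδ]; simp [hδdef]; linarith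
    rw [min_eq_left h1, max_eq_right zero_le_one]
  have hu_lip : ∀ y z, |u y - u z| ≤ δ⁻¹ * dist y z := by
    intro y z
    have h1 : |u y - u z| ≤ |(r - dist x y) / δ - (r - dist x z) / δ| := by
      simp only [hu, max_comm (0:ℝ)]
      refine le_trans (abs_max_sub_max_le_abs _ _ _) ?_
      refine le_trans (abs_min_sub_min_le_max _ _ _ _) ?_
      simp
    refine le_trans h1 ?_
    rw [div_sub_div_same, abs_div, abs_of_pos hδ, div_le_iff₀ hδ]
    have he : r - dist x y - (r - dist x z) = dist z x - dist y x := by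
      rw [dist_comm z x, dist_comm y x]; ring
    rw [he]
    calc |dist z x - dist y x| ≤ dist z y := abs_dist_sub_le z y x
    _ = dist y z := dist_comm z y
    _ = δ⁻¹ * dist y z * δ := by field_simp
  have hgrad : ∀ᵐ y ∂μ, ∀ᵐ z ∂μ, |u y - u z| ≤ dist y z * (g y + g z) := by
    filter_upwards with y
    filter_upwards with z
    by_cases hy : y ∈ ball x r
    · have hgy : g y = δ⁻¹ := Set.indicator_of_mem hy _
      have h2 : δ⁻¹ ≤ g y + g z := by rw [hgy]; linarith [hg_nonneg z]
      calc |u y - u z| ≤ δ⁻¹ * dist y z := hu_lip y z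
        _ ≤ (g y + g z) * dist y z := mul_le_mul_of_nonneg_right h2 dist_nonneg
        _ = dist y z * (g y + g z) := mul_comm _ _
    · by_cases hz : z ∈ ball x r
      · have hgz : g z = δ⁻¹ := Set.indicator_of_mem hz _
        have h2 : δ⁻¹ ≤ g y + g z := by rw [hgz]; linarith [hg_nonneg y]
        calc |u y - u z| ≤ δ⁻¹ * dist y z := hu_lip y z
          _ ≤ (g y + g z) * dist y z := mul_le_mul_of_nonneg_right h2 dist_nonneg
          _ = dist y z * (g y + g z) := mul_comm _ _
      · rw [hu_zero y hy, hu_zero z hz]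
        simp [mul_nonneg dist_nonneg (add_nonneg (hg_nonneg y) (hg_nonneg z))]
  have key := hembed u g hu_meas hg_meas hg_nonneg hgrad
  -- lower bound on LHS
  have hLHS : μ (ball x r') ^ (1/q) ≤ (∫⁻ y, ENNReal.ofReal |u y| ^ q ∂μ) ^ (1/q) := by
    apply ENNReal.rpow_le_rpow _ (by positivity)
    calc μ (ball x r') = ∫⁻ y, Set.indicator (ball x r') (fun _ => (1:ℝ≥0∞)) y ∂μ := by
          rw [lintegral_indicator_const measurableSet_ball]; simp
      _ ≤ ∫⁻ y, ENNReal.ofReal |u y| ^ q ∂μ := by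
          apply lintegral_mono
          intro y
          by_cases hy : y ∈ ball x r'
          · rw [Set.indicator_of_mem hy]
            show (1:ℝ≥0∞) ≤ ENNReal.ofReal |u y| ^ q
            rw [hu_one y hy]
            simp
          · simp [Set.indicator_of_notMem hy]
  -- upper bounds for RHS
  have hUp : (∫⁻ y, ENNReal.ofReal |u y| ^ p ∂μ) ≤ μ (ball x r) := by
    calc (∫⁻ y, ENNReal.ofReal |u y| ^ p ∂μ)
        ≤ ∫⁻ y, Set.indicator (ball x r) (fun _ => (1:ℝ≥0∞)) y ∂μ := by
          apply lintegral_mono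
          intro y
          by_cases hy : y ∈ ball x r
          · rw [Set.indicator_of_mem hy]
            have h1 : ENNReal.ofReal |u y| ≤ 1 := by
              rw [abs_of_nonneg (hu01 y).1]
              exact ENNReal.ofReal_le_one.mpr (hu01 y).2
            calc ENNReal.ofReal |u y| ^ p ≤ 1 ^ p := ENNReal.rpow_le_rpow h1 hp0.le
              _ = 1 := ENNReal.one_rpow p
          · simp [Set.indicator_of_notMem hy, hu_zero y hy, ENNReal.zero_rpow_of_pos hp0]
      _ = μ (ball x r) := by rw [lintegral_indicator_const measurableSet_ball]; simp
  have hGp : (∫⁻ y, ENNReal.ofReal (g y) ^ p ∂μ) = ENNReal.ofReal δ⁻¹ ^ p * μ (ball x r) := by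
    have : ∀ y, ENNReal.ofReal (g y) ^ p =
        Set.indicator (ball x r) (fun _ => ENNReal.ofReal δ⁻¹ ^ p) y := by
      intro y
      by_cases h : y ∈ ball x r
      · have h1 : g y = δ⁻¹ := Set.indicator_of_mem h _
        rw [h1, Set.indicator_of_mem h]
      · have h1 : g y = 0 := Set.indicator_of_notMem h _
        rw [h1, Set.indicator_of_notMem h]
        simp [ENNReal.zero_rpow_of_pos hp0]
    simp_rw [this]
    rw [lintegral_indicator_const measurableSet_ball]
  have hμB : μ (ball x r) ≠ ∞ := (hbounded _ isBounded_ball).ne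
  have hRHS : ENNReal.ofReal Ce *
      ((∫⁻ y, ENNReal.ofReal |u y| ^ p ∂μ) ^ (1 / p) +
        (∫⁻ y, ENNReal.ofReal (g y) ^ p ∂μ) ^ (1 / p)) ≤
      ENNReal.ofReal (Ce * (1 + δ⁻¹)) * μ (ball x r) ^ (1/p) := by
    have h1 : (∫⁻ y, ENNReal.ofReal |u y| ^ p ∂μ) ^ (1/p) ≤ μ (ball x r) ^ (1/p) :=
      ENNReal.rpow_le_rpow hUp (by positivity)
    have h2 : (∫⁻ y, ENNReal.ofReal (g y) ^ p ∂μ) ^ (1/p) =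
        ENNReal.ofReal δ⁻¹ * μ (ball x r) ^ (1/p) := by
      rw [hGp, ENNReal.mul_rpow_of_nonneg _ _ (by positivity), ← ENNReal.rpow_mul,
        mul_one_div, div_self hp0.ne', ENNReal.rpow_one]
    rw [ENNReal.ofReal_mul hCe.le, ENNReal.ofReal_add zero_le_one (by positivity),
      ENNReal.ofReal_one, mul_assoc, add_mul, one_mul]
    exact mul_le_mul_right (add_le_add h1 h2.le) _
  calc μ (ball x r') ^ (1/q) ≤ _ := hLHS
    _ ≤ _ := key
    _ ≤ ENNReal.ofReal (Ce * (1 + δ⁻¹)) * μ (ball x r) ^ (1/p) := hRHS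
    _ = ENNReal.ofReal (Ce * (1 + (r - r')⁻¹)) * μ (ball x r) ^ (1/p) := by rw [hδdef]
end

section
/- Let p ≥ 1, α > 1, A > 0, and let (m_j)_{j≥1} be a sequence of real numbers for which there exist constants a, b with 0 < a ≤ m_j ≤ b < ∞ for all j, and suppose m_{j+1}^{1/(αp)} ≤ A · 2^{j+3} · m_j^{1/p} for all j ≥ 1. Then 1 ≤ 2^{pα²/(α−1)² + 3pα/(α−1)} · A^{pα/(α−1)} · m_1. -/
/-!
Put `u j = α⁻ʲ · log m_{j+1}`. Taking logarithms in the hypothesis and scaling by `p α^{-j}` gives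
`u (j+1) ≤ u j + p α^{-j} (log A + (j+4) log 2)`, so `u j` is bounded by `log m_1` plus a partial
sum of a convergent series. Since `m_{j+1} ≥ a > 0`, we have `u j ≥ α⁻ʲ log a → 0`, and letting
`j → ∞` shows `log m_1 + p (log A · α/(α-1) + log 2 · (α²/(α-1)² + 3α/(α-1))) ≥ 0`.
-/

open Finset Filter Topology Real

lemma le_add_sum_range_of_le_add {u d : ℕ → ℝ} (h : ∀ j, u (j + 1) ≤ u j + d j) (n : ℕ) :
    u n ≤ u 0 + ∑ k ∈ range n, d k := by
  induction n with
  | zero => simp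
  | succ n ih => rw [sum_range_succ]; linarith [h n]

lemma nonneg_add_of_le_add_of_hasSum {u d l : ℕ → ℝ} {s : ℝ}
    (hstep : ∀ j, u (j + 1) ≤ u j + d j) (hd : HasSum d s)
    (hl : Tendsto l atTop (𝓝 0)) (hlu : ∀ j, l j ≤ u j) : 0 ≤ u 0 + s :=
  le_of_tendsto_of_tendsto' hl (tendsto_const_nhds.add hd.tendsto_sum_nat)
    fun n => (hlu n).trans (le_add_sum_range_of_le_add hstep n)

lemma hasSum_inv_pow_of_one_lt {α : ℝ} (hα : 1 < α) :
    HasSum (fun k : ℕ => α⁻¹ ^ k) (α / (α - 1)) := by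
  convert hasSum_geometric_of_lt_one (by positivity) (inv_lt_one_of_one_lt₀ hα) using 1
  have : α - 1 ≠ 0 := sub_ne_zero.2 hα.ne'
  field_simp

lemma hasSum_add_four_mul_inv_pow_of_one_lt {α : ℝ} (hα : 1 < α) :
    HasSum (fun k : ℕ => ((k : ℝ) + 4) * α⁻¹ ^ k) (α ^ 2 / (α - 1) ^ 2 + 3 * (α / (α - 1))) := by
  have hr : ‖α⁻¹‖ < 1 := by
    rw [norm_inv, Real.norm_of_nonneg (by linarith)]; exact inv_lt_one_of_one_lt₀ hα
  have hα' : α - 1 ≠ 0 := sub_ne_zero.2 hα.ne'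
  have hsum : α ^ 2 / (α - 1) ^ 2 + 3 * (α / (α - 1)) = α⁻¹ / (1 - α⁻¹) ^ 2 + 4 * (α / (α - 1)) := by
    field_simp
    ring
  rw [hsum]
  exact ((hasSum_coe_mul_geometric_of_norm_lt_one hr).add
    ((hasSum_inv_pow_of_one_lt hα).mul_left 4)).congr_fun fun k => by ring

lemma inv_mul_log_le_of_rpow_le {p α A x y : ℝ} (hp : 0 < p) (hα : 0 < α) (hA : 0 < A)
    (hx : 0 < x) (hy : 0 < y) {k : ℕ} (h : y ^ (1 / (α * p)) ≤ A * 2 ^ k * x ^ (1 / p)) :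
    α⁻¹ * log y ≤ log x + p * (log A + k * log 2) := by
  have hlog := log_le_log (by positivity) h
  rw [log_mul (by positivity) (by positivity), log_mul hA.ne' (by positivity), log_rpow hy,
    log_rpow hx, log_pow] at hlog
  have hscaled := mul_le_mul_of_nonneg_left hlog hp.le
  field_simp at hscaled ⊢
  linarith

/-- Abstract iteration lemma: if `0 < a ≤ m_j ≤ b` for all `j ≥ 1` and
`m_{j+1}^{1/(αp)} ≤ A · 2^{j+3} · m_j^{1/p}` for all `j ≥ 1`, then
`1 ≤ 2^{pα²/(α-1)² + 3pα/(α-1)} · A^{pα/(α-1)} · m_1`. -/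
theorem iteration_lemma
    (p α A : ℝ) (hp : 1 ≤ p) (hα : 1 < α) (hA : 0 < A)
    (m : ℕ → ℝ) (a b : ℝ) (ha : 0 < a)
    (hbound : ∀ j : ℕ, 1 ≤ j → a ≤ m j ∧ m j ≤ b)
    (hiter : ∀ j : ℕ, 1 ≤ j →
      m (j + 1) ^ (1 / (α * p)) ≤ A * 2 ^ (j + 3) * m j ^ (1 / p)) :
    1 ≤ 2 ^ (p * α ^ 2 / (α - 1) ^ 2 + 3 * p * α / (α - 1)) *
          A ^ (p * α / (α - 1)) * m 1 := by
  have hm : ∀ j, 0 < m (j + 1) := fun j => ha.trans_le (hbound (j + 1) le_add_self).1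
  set u : ℕ → ℝ := fun j => α⁻¹ ^ j * log (m (j + 1))
  set d : ℕ → ℝ := fun j => p * (log A * α⁻¹ ^ j + log 2 * (((j : ℝ) + 4) * α⁻¹ ^ j))
  have hstep : ∀ j, u (j + 1) ≤ u j + d j := fun j => by
    have h := inv_mul_log_le_of_rpow_le (by linarith) (by linarith) hA (hm j) (hm (j + 1))
      (hiter (j + 1) le_add_self)
    have h' := mul_le_mul_of_nonneg_left h (pow_nonneg (inv_nonneg.2 (by linarith : 0 ≤ α)) j)
    simp only [u, d, pow_succ]
    push_cast at h'
    linarith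
  have hd := (((hasSum_inv_pow_of_one_lt hα).mul_left (log A)).add
    ((hasSum_add_four_mul_inv_pow_of_one_lt hα).mul_left (log 2))).mul_left p
  have hl : Tendsto (fun j : ℕ => α⁻¹ ^ j * log a) atTop (𝓝 0) := by
    simpa using (tendsto_pow_atTop_nhds_zero_of_lt_one (by positivity)
      (inv_lt_one_of_one_lt₀ hα)).mul_const (log a)
  have hlu : ∀ j, α⁻¹ ^ j * log a ≤ u j := fun j =>
    mul_le_mul_of_nonneg_left (log_le_log ha (hbound (j + 1) le_add_self).1) (by positivity)
  have hfin := nonneg_add_of_le_add_of_hasSum hstep hd hl hlu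
  rw [← log_nonneg_iff (by have := hm 0; positivity), log_mul (by positivity) (hm 0).ne',
    log_mul (by positivity) (by positivity), log_rpow two_pos, log_rpow hA]
  simp only [u, pow_zero, one_mul, zero_add] at hfin
  convert hfin using 1
  ring
end
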